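/- arXiv:2111.13994 — 2 statements merged into one kernel-verified Lean document; each statement's English description precedes it below -/
import Mathlib

section
/- For every natural number L, the sum over n₁ ≥ 0 of q^(n₁²+n₁) times the Gaussian binomial coefficient (L choose n₁) in base q² equals the alternating sum over all integers j of (-1)^j q^(2j²+j) times the Gaussian binomial coefficient (2L+1 choose L-2j) in base q; equivalently, both equal the product (-q²;q²)_L = ∏_{k=1}^{L} (1+q^(2k)). -/
/-! Both sides equal `(-q²;q²)_L`. For the left side this is the `q`-binomial theorem
`∏_{k<L} (1 + z x^k) = ∑_n x^(n choose 2) z^n [L, n]_x` at `x = z = q²`.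
For the right side put `W(N, c, a) = ∑_j (-1)^j q^(2j² + aj) [N, c - 2j]_q`. The two `q`-Pascal
rules express `W(2L+3, L+1, 1)` through `W(2L+1, L-1, 3)`, `W(2L+1, L, 1)` and `W(2L+1, L+1, -1)`,
and the reindexings `j ↦ -j` and `j ↦ -1-j` (using `[N, m] = [N, N - m]`) turn the outer two
back into multiples of `W(2L+1, L, 1)`, so that `W(2L+3, L+1, 1) = (1 + q^(2L+2)) W(2L+1, L, 1)`.
-/

open LaurentPolynomial Finset

noncomputable section

/-- Gaussian binomial coefficient with natural indices, in base `x`, defined by the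
`q`-Pascal recurrence `[n+1, k+1] = [n, k] + x^(k+1) * [n, k+1]`.  It vanishes for `k > n`. -/
def gaussAux (x : LaurentPolynomial ℤ) : ℕ → ℕ → LaurentPolynomial ℤ
  | _, 0 => 1
  | 0, _ + 1 => 0
  | n + 1, k + 1 => gaussAux x n k + x ^ (k + 1) * gaussAux x n (k + 1)

/-- The Gaussian binomial coefficient `[n choose k]` in base `x`, for integer indices:
it is zero when `n < 0` or `k < 0` (and, by `gaussAux`, also when `k > n`). -/
def qbin (x : LaurentPolynomial ℤ) (n k : ℤ) : LaurentPolynomial ℤ :=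
  if 0 ≤ n ∧ 0 ≤ k then gaussAux x n.toNat k.toNat else 0

/-- `(-1)^j` for an integer `j`, as a Laurent polynomial. -/
def m1 (j : ℤ) : LaurentPolynomial ℤ := ((((-1 : ℤˣ) ^ j : ℤˣ) : ℤ) : LaurentPolynomial ℤ)

section gaussAux

variable (x : LaurentPolynomial ℤ)

lemma gaussAux_zero_right (n : ℕ) : gaussAux x n 0 = 1 := by
  cases n <;> rfl

lemma gaussAux_succ_succ (n k : ℕ) :
    gaussAux x (n + 1) (k + 1) = gaussAux x n k + x ^ (k + 1) * gaussAux x n (k + 1) := rfl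

lemma gaussAux_eq_zero_of_lt : ∀ {n k : ℕ}, n < k → gaussAux x n k = 0
  | 0, _ + 1, _ => rfl
  | _ + 1, _ + 1, h => by
    rw [gaussAux_succ_succ, gaussAux_eq_zero_of_lt (by omega), gaussAux_eq_zero_of_lt (by omega),
      mul_zero, add_zero]

lemma gaussAux_self : ∀ n : ℕ, gaussAux x n n = 1
  | 0 => rfl
  | n + 1 => by
    rw [gaussAux_succ_succ, gaussAux_self n, gaussAux_eq_zero_of_lt x n.lt_succ_self, mul_zero,
      add_zero]

lemma gaussAux_add_succ_succ : ∀ m k : ℕ,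
    gaussAux x (m + k + 1) (k + 1) = x ^ m * gaussAux x (m + k) k + gaussAux x (m + k) (k + 1)
  | 0, k => by
    rw [zero_add, gaussAux_succ_succ, gaussAux_self, gaussAux_eq_zero_of_lt x k.lt_succ_self]
    ring
  | m + 1, 0 => by
    have ih := gaussAux_add_succ_succ m 0
    have pascal := gaussAux_succ_succ x m 0
    simp only [add_zero, gaussAux_zero_right] at ih pascal ⊢
    rw [gaussAux_succ_succ, gaussAux_zero_right]
    linear_combination x * ih - pascal
  | m + 1, k + 1 => by
    obtain ⟨n, hn⟩ : ∃ n, m + k + 1 = n := ⟨_, rfl⟩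
    have ih₁ := gaussAux_add_succ_succ (m + 1) k
    have ih₂ := gaussAux_add_succ_succ m (k + 1)
    rw [show m + 1 + k = n by omega] at ih₁
    rw [show m + (k + 1) = n by omega] at ih₂
    rw [show m + 1 + (k + 1) = n + 1 by omega, gaussAux_succ_succ x (n + 1)]
    linear_combination ih₁ - x ^ (m + 1) * gaussAux_succ_succ x n k + x ^ (k + 2) * ih₂ -
      gaussAux_succ_succ x n (k + 1)

lemma gaussAux_add_symm : ∀ m k : ℕ, gaussAux x (m + k) k = gaussAux x (m + k) m
  | 0, k => by rw [zero_add, gaussAux_self, gaussAux_zero_right]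
  | m + 1, 0 => by rw [add_zero, gaussAux_self, gaussAux_zero_right]
  | m + 1, k + 1 => by
    obtain ⟨n, hn⟩ : ∃ n, m + k + 1 = n := ⟨_, rfl⟩
    have ih₁ := gaussAux_add_symm (m + 1) k
    have ih₂ := gaussAux_add_symm m (k + 1)
    have dual := gaussAux_add_succ_succ x (k + 1) m
    rw [show m + 1 + k = n by omega] at ih₁
    rw [show m + (k + 1) = n by omega] at ih₂
    rw [show k + 1 + m = n by omega] at dual
    rw [show m + 1 + (k + 1) = n + 1 by omega, gaussAux_succ_succ, dual, ih₁, ih₂]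
    ring

end gaussAux

section qbin

variable (x : LaurentPolynomial ℤ)

lemma qbin_natCast (n k : ℕ) : qbin x n k = gaussAux x n k := by
  simp [qbin]

lemma qbin_zero_right (n : ℕ) : qbin x n 0 = 1 := by
  simpa [gaussAux_zero_right] using qbin_natCast x n 0

lemma qbin_of_neg (n : ℤ) {m : ℤ} (hm : m < 0) : qbin x n m = 0 := by
  rw [qbin, if_neg (by omega)]

lemma qbin_of_lt (n : ℕ) {m : ℤ} (h : (n : ℤ) < m) : qbin x n m = 0 := by
  lift m to ℕ using (by omega)
  rw [qbin_natCast, gaussAux_eq_zero_of_lt x (by omega)]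

lemma qbin_sub_right (n : ℕ) (m : ℤ) : qbin x n (n - m) = qbin x n m := by
  rcases lt_or_ge m 0 with hm | hm
  · rw [qbin_of_neg x _ hm, qbin_of_lt x n (by omega)]
  rcases lt_or_ge (n : ℤ) m with hmn | hmn
  · rw [qbin_of_lt x n hmn, qbin_of_neg x _ (by omega)]
  lift m to ℕ using hm
  obtain ⟨k, rfl⟩ := Nat.exists_eq_add_of_le (by omega : m ≤ n)
  rw [show ((m + k : ℕ) : ℤ) - m = (k : ℕ) by push_cast; ring, qbin_natCast, qbin_natCast,
    add_comm, gaussAux_add_symm]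

lemma hasFiniteSupport_mul_qbin (f : ℤ → LaurentPolynomial ℤ) (N : ℕ) (c : ℤ) :
    (fun j => f j * qbin x N (c - 2 * j)).HasFiniteSupport := by
  refine (Set.finite_Icc (-(N : ℤ) - c.natAbs) c.natAbs).subset fun j hj => ?_
  rw [Function.mem_support] at hj
  rw [Set.mem_Icc]
  by_contra hout
  refine hj ?_
  rcases lt_or_ge (c - 2 * j) 0 with h | h
  · rw [qbin_of_neg x _ h, mul_zero]
  · rw [qbin_of_lt x N (m := c - 2 * j) (by omega), mul_zero]

end qbin

theorem prod_range_one_add_mul_pow (x z : LaurentPolynomial ℤ) (L : ℕ) :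
    ∏ k ∈ range L, (1 + z * x ^ k) =
      ∑ n ∈ range (L + 1), x ^ n.choose 2 * z ^ n * gaussAux x L n := by
  induction L generalizing z with
  | zero => simp [gaussAux_zero_right]
  | succ L ih =>
    have hP : ∏ k ∈ range L, (1 + z * x ^ (k + 1)) =
        ∑ n ∈ range (L + 1), x ^ n.choose 2 * (x * z) ^ n * gaussAux x L n := by
      rw [← ih]
      exact prod_congr rfl fun k _ => by ring
    have low : ∑ n ∈ range (L + 1), x ^ (n + 1).choose 2 * z ^ (n + 1) * gaussAux x L n =
        z * ∑ n ∈ range (L + 1), x ^ n.choose 2 * (x * z) ^ n * gaussAux x L n := by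
      rw [mul_sum]
      refine sum_congr rfl fun n _ => ?_
      rw [Nat.choose_succ_succ', Nat.choose_one_right]
      ring
    have high : ∑ n ∈ range (L + 1), x ^ (n + 1).choose 2 * z ^ (n + 1) *
        (x ^ (n + 1) * gaussAux x L (n + 1)) + 1 =
        ∑ n ∈ range (L + 1), x ^ n.choose 2 * (x * z) ^ n * gaussAux x L n := calc
      _ = ∑ n ∈ range (L + 1 + 1), x ^ n.choose 2 * (x * z) ^ n * gaussAux x L n := by
        rw [sum_range_succ' (fun n => x ^ n.choose 2 * (x * z) ^ n * gaussAux x L n)]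
        simp only [gaussAux_zero_right, Nat.choose_zero_succ, pow_zero, mul_one]
        exact congrArg (· + 1) (sum_congr rfl fun n _ => by ring)
      _ = _ := by rw [sum_range_succ, gaussAux_eq_zero_of_lt x L.lt_succ_self, mul_zero, add_zero]
    rw [prod_range_succ', sum_range_succ']
    simp only [gaussAux_succ_succ, mul_add, sum_add_distrib, low, gaussAux_zero_right,
      Nat.choose_zero_succ, pow_zero, mul_one]
    rw [add_assoc, high, hP]
    ring

lemma choose_two_mul_two_add_self (n : ℕ) : n.choose 2 * 2 + n = n ^ 2 := by
  induction n with
  | zero => rfl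
  | succ n ih =>
    rw [Nat.choose_succ_succ', Nat.choose_one_right]
    linear_combination ih

lemma sum_range_T_mul_gaussAux_T_two (L : ℕ) :
    ∑ n ∈ range (L + 1), T ((n : ℤ) ^ 2 + n) * gaussAux (T 2) L n =
      ∏ k ∈ Icc 1 L, (1 + T (2 * (k : ℤ))) := by
  have hterm (n : ℕ) :
      (T 2 : LaurentPolynomial ℤ) ^ n.choose 2 * T 2 ^ n = T ((n : ℤ) ^ 2 + n) := by
    have h : (n.choose 2 * 2 + n : ℤ) = n ^ 2 := mod_cast choose_two_mul_two_add_self n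
    rw [T_pow, T_pow, ← T_add]
    congr 1
    linear_combination h
  rw [← Ico_add_one_right_eq_Icc, prod_Ico_eq_prod_range, add_tsub_cancel_right]
  simp only [← hterm, ← prod_range_one_add_mul_pow]
  refine prod_congr rfl fun k _ => ?_
  rw [T_pow, ← T_add]
  push_cast
  ring_nf

lemma finsum_mul_qbin_eq_sum_range (f : ℕ → LaurentPolynomial ℤ) (x : LaurentPolynomial ℤ)
    (L : ℕ) :
    ∑ᶠ n : ℕ, f n * qbin x L n = ∑ n ∈ range (L + 1), f n * gaussAux x L n := by
  rw [finsum_eq_sum_of_support_subset _ (s := range (L + 1)) fun n hn => ?_]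
  · simp only [qbin_natCast]
  · rw [Function.mem_support, qbin_natCast] at hn
    rw [coe_range, Set.mem_Iio]
    by_contra h
    exact hn (by rw [gaussAux_eq_zero_of_lt x (by omega), mul_zero])

lemma qbin_T_one_succ (n : ℕ) (m : ℤ) :
    qbin (T 1) (n + 1 : ℕ) m = qbin (T 1) n (m - 1) + T m * qbin (T 1) n m := by
  rcases lt_trichotomy m 0 with hm | rfl | hm
  · rw [qbin_of_neg _ _ hm, qbin_of_neg _ _ hm, qbin_of_neg _ _ (by omega)]
    ring
  · rw [qbin_of_neg _ _ (show (0 : ℤ) - 1 < 0 by norm_num), qbin_zero_right, qbin_zero_right,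
      T_zero]
    ring
  · lift m to ℕ using hm.le
    obtain ⟨k, rfl⟩ : ∃ k, m = k + 1 := ⟨m - 1, by omega⟩
    rw [show ((k + 1 : ℕ) : ℤ) - 1 = (k : ℕ) by push_cast; ring, qbin_natCast, qbin_natCast,
      qbin_natCast, gaussAux_succ_succ, T_pow]
    push_cast
    ring_nf

lemma qbin_T_one_succ' (n : ℕ) (m : ℤ) :
    qbin (T 1) (n + 1 : ℕ) m = T (n + 1 - m) * qbin (T 1) n (m - 1) + qbin (T 1) n m := by
  rw [← qbin_sub_right _ (n + 1), qbin_T_one_succ, ← qbin_sub_right _ n m,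
    ← qbin_sub_right _ n (m - 1)]
  push_cast
  ring_nf

lemma m1_zero : m1 0 = 1 := by
  simp [m1]

lemma m1_add_one (j : ℤ) : m1 (j + 1) = -m1 j := by
  simp [m1, zpow_add_one]

lemma m1_neg (j : ℤ) : m1 (-j) = m1 j := by
  simp [m1]

def altSum (N : ℕ) (c a : ℤ) : LaurentPolynomial ℤ :=
  ∑ᶠ j : ℤ, m1 j * T (2 * j ^ 2 + a * j) * qbin (T 1) N (c - 2 * j)

lemma altSum_succ (N : ℕ) (c a : ℤ) :
    altSum (N + 1) c a = altSum N (c - 1) a + T c * altSum N c (a - 2) := by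
  rw [altSum, altSum, altSum, mul_finsum, ← finsum_add_distrib
    (hasFiniteSupport_mul_qbin _ _ N (c - 1)) ((hasFiniteSupport_mul_qbin _ _ N c).fun_mul_right _)]
  refine finsum_congr fun j => ?_
  have hT : T (2 * j ^ 2 + a * j) * T (c - 2 * j) =
      (T c * T (2 * j ^ 2 + (a - 2) * j) : LaurentPolynomial ℤ) := by
    rw [← T_add, ← T_add]; ring_nf
  rw [qbin_T_one_succ, sub_right_comm]
  linear_combination m1 j * qbin (T 1) N (c - 2 * j) * hT

lemma altSum_succ' (N : ℕ) (c a : ℤ) :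
    altSum (N + 1) c a = T (N + 1 - c) * altSum N (c - 1) (a + 2) + altSum N c a := by
  rw [altSum, altSum, altSum, mul_finsum, ← finsum_add_distrib
    ((hasFiniteSupport_mul_qbin _ _ N (c - 1)).fun_mul_right _) (hasFiniteSupport_mul_qbin _ _ N c)]
  refine finsum_congr fun j => ?_
  have hT : T (2 * j ^ 2 + a * j) * T (N + 1 - (c - 2 * j)) =
      (T (N + 1 - c) * T (2 * j ^ 2 + (a + 2) * j) : LaurentPolynomial ℤ) := by
    rw [← T_add, ← T_add]; ring_nf
  rw [qbin_T_one_succ', sub_right_comm]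
  linear_combination m1 j * qbin (T 1) N (c - 1 - 2 * j) * hT

lemma altSum_reindex_neg (N : ℕ) (c a : ℤ) : altSum N c a = altSum N (N - c) (-a) := by
  rw [altSum, altSum, ← finsum_comp_equiv (Equiv.neg ℤ)]
  refine finsum_congr fun j => ?_
  rw [Equiv.neg_apply, m1_neg, ← qbin_sub_right _ N]
  ring_nf

lemma altSum_reindex_neg_sub_one (N : ℕ) (c a : ℤ) :
    altSum N c a = -T (2 - a) * altSum N (N - c - 2) (4 - a) := by
  rw [altSum, altSum, mul_finsum, ← finsum_comp_equiv (Equiv.subLeft (-1))]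
  refine finsum_congr fun j => ?_
  have hT : T (2 * (-(j + 1)) ^ 2 + a * -(j + 1)) =
      (T (2 - a) * T (2 * j ^ 2 + (4 - a) * j) : LaurentPolynomial ℤ) := by
    rw [← T_add]; ring_nf
  rw [Equiv.subLeft_apply, show -1 - j = -(j + 1) by ring, m1_neg, m1_add_one, hT,
    ← qbin_sub_right _ N]
  ring_nf

lemma altSum_one_zero_one : altSum 1 0 1 = 1 := by
  rw [altSum, finsum_eq_single _ 0 fun j hj => ?_]
  · simpa [m1_zero] using qbin_zero_right (T 1) 1
  · rcases lt_or_gt_of_ne hj with h | h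
    · rw [qbin_of_lt _ 1 (by omega), mul_zero]
    · rw [qbin_of_neg _ _ (by omega), mul_zero]

lemma altSum_two_mul_add_three (L : ℕ) :
    altSum (2 * L + 3) (L + 1) 1 = (1 + T (2 * (L + 1))) * altSum (2 * L + 1) L 1 := by
  have hN : ((2 * L + 1 : ℕ) : ℤ) = 2 * L + 1 := by push_cast; ring
  have hneg_sub_one : altSum (2 * L + 1) (L - 1) 3 = -T (-1) * altSum (2 * L + 1) L 1 := by
    rw [altSum_reindex_neg_sub_one, hN, show 2 * (L : ℤ) + 1 - (L - 1) - 2 = L by ring]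
    norm_num
  have hneg : altSum (2 * L + 1) (L + 1) (-1) = altSum (2 * L + 1) L 1 := by
    rw [altSum_reindex_neg, hN, show 2 * (L : ℤ) + 1 - (L + 1) = L by ring, neg_neg]
  have hT₁ : T (L + 2) * T (-1) = (T (L + 1) : LaurentPolynomial ℤ) := by
    rw [← T_add]; ring_nf
  have hT₂ : T (L + 2) * T L = (T (2 * (L + 1)) : LaurentPolynomial ℤ) := by
    rw [← T_add]; ring_nf
  calc altSum (2 * L + 3) (L + 1) 1
      = T (L + 2) * altSum (2 * L + 2) L 3 + altSum (2 * L + 2) (L + 1) 1 := by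
        rw [altSum_succ' (2 * L + 2)]
        push_cast
        ring_nf
    _ = T (L + 2) * (-T (-1) * altSum (2 * L + 1) L 1 + T L * altSum (2 * L + 1) L 1) +
          (altSum (2 * L + 1) L 1 + T (L + 1) * altSum (2 * L + 1) L 1) := by
        rw [altSum_succ (2 * L + 1), altSum_succ (2 * L + 1), hneg_sub_one]
        norm_num [hneg]
    _ = (1 + T (2 * (L + 1))) * altSum (2 * L + 1) L 1 := by
        linear_combination altSum (2 * L + 1) L 1 * (hT₂ - hT₁)

lemma altSum_eq_prod (L : ℕ) :
    altSum (2 * L + 1) L 1 = ∏ k ∈ Icc 1 L, (1 + T (2 * (k : ℤ))) := by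
  induction L with
  | zero => simpa using altSum_one_zero_one
  | succ L ih =>
    rw [prod_Icc_succ_top (by omega), ← ih, show 2 * (L + 1) + 1 = 2 * L + 3 by ring,
      Nat.cast_succ, altSum_two_mul_add_three, mul_comm]

theorem stmt0 (L : ℕ) :
    (∑ᶠ n₁ : ℕ, T ((n₁ : ℤ) ^ 2 + n₁) * qbin (T 2) L n₁) =
      (∑ᶠ j : ℤ, m1 j * T (2 * j ^ 2 + j) * qbin (T 1) (2 * L + 1) (L - 2 * j)) ∧
    (∑ᶠ j : ℤ, m1 j * T (2 * j ^ 2 + j) * qbin (T 1) (2 * L + 1) (L - 2 * j)) =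
      ∏ k ∈ Finset.Icc 1 L, (1 + T (2 * (k : ℤ))) := by
  have rhs : (∑ᶠ j : ℤ, m1 j * T (2 * j ^ 2 + j) * qbin (T 1) (2 * L + 1) (L - 2 * j)) =
      ∏ k ∈ Icc 1 L, (1 + T (2 * (k : ℤ))) := by
    simpa [altSum] using altSum_eq_prod L
  rw [rhs, finsum_mul_qbin_eq_sum_range, sum_range_T_mul_gaussAux_T_two]
  exact ⟨rfl, rfl⟩
end
end

section
/- Prodinger's three-term recurrence for Gaussian binomial coefficients: for all natural numbers L > 0 and integers k, [L choose k]_q = (1+q-q^L)[L-1 choose k]_q + q^(2L-2k)[L-1 choose k-1]_q + (q^L - q)[L-2 choose k]_q. -/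
open LaurentPolynomial Finset

noncomputable section

lemma gauss_zero (x : LaurentPolynomial ℤ) (n : ℕ) : gaussAux x n 0 = 1 := by
  cases n <;> rfl

lemma gauss_succ (x : LaurentPolynomial ℤ) (n k : ℕ) :
    gaussAux x (n+1) (k+1) = gaussAux x n k + x ^ (k+1) * gaussAux x n (k+1) := rfl

lemma gauss_zero_of_lt (x : LaurentPolynomial ℤ) : ∀ n k, n < k → gaussAux x n k = 0
  | 0, _+1, _ => rfl
  | n+1, k+1, h => by
      rw [gauss_succ, gauss_zero_of_lt x n k (by omega), gauss_zero_of_lt x n (k+1) (by omega)]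
      ring

lemma pascal_mult (x : LaurentPolynomial ℤ) : ∀ n k,
    x ^ k * gaussAux x (n+1) (k+1) = x ^ n * gaussAux x n k + x ^ k * gaussAux x n (k+1)
  | 0, 0 => by simp [gaussAux]
  | 0, k+1 => by
      rw [gauss_zero_of_lt x 1 (k+2) (by omega), gauss_zero_of_lt x 0 (k+1) (by omega),
        gauss_zero_of_lt x 0 (k+2) (by omega)]
      ring
  | n+1, 0 => by
      have ih := pascal_mult x n 0
      rw [gauss_succ x (n+1) 0, gauss_succ x n 0, gauss_zero, gauss_zero] at *
      linear_combination x * ih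
  | n+1, k+1 => by
      have ih1 := pascal_mult x n k
      have ih2 := pascal_mult x n (k+1)
      rw [gauss_succ x (n+1) (k+1), gauss_succ x n k, gauss_succ x n (k+1)] at *
      linear_combination x * ih1 + x ^ (k+2) * ih2

lemma Tcancel {a b : LaurentPolynomial ℤ} (n : ℤ) (h : T n * a = T n * b) : a = b := by
  have h2 := congrArg (fun y => T (-n) * y) h
  simpa [← mul_assoc, ← T_add] using h2

lemma pascal_T (n k : ℕ) :
    T (k : ℤ) * gaussAux (T 1) (n+1) (k+1)
      = T (n : ℤ) * gaussAux (T 1) n k + T (k : ℤ) * gaussAux (T 1) n (k+1) := by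
  have h := pascal_mult (T 1 : LaurentPolynomial ℤ) n k
  simpa [T_pow] using h

lemma pascal_div (n k : ℕ) :
    gaussAux (T 1) (n+1) (k+1)
      = T ((n : ℤ) - k) * gaussAux (T 1) n k + gaussAux (T 1) n (k+1) := by
  apply Tcancel (k : ℤ)
  have h := pascal_T n k
  have h' : (T (k : ℤ) * T ((n : ℤ) - k) : LaurentPolynomial ℤ) = T (n : ℤ) := by
    rw [← T_add]; congr 1; ring
  linear_combination h - (gaussAux (T 1) n k : LaurentPolynomial ℤ) * h'

lemma Elem (n k : ℕ) :
    (1 - T ((n:ℤ)+1-k)) * gaussAux (T 1) (n+1) k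
      = (1 - T ((n:ℤ)+1)) * gaussAux (T 1) n k := by
  cases k with
  | zero => simp [gauss_zero]
  | succ j =>
    have e1 : ((n:ℤ)+1-(↑(j+1) : ℤ)) = (n:ℤ) - j := by push_cast; ring
    rw [e1]
    apply Tcancel (j : ℤ)
    have hA := pascal_T n j
    have hB : T (n:ℤ) * gaussAux (T 1) (n+1) (j+1)
        = T (n:ℤ) * gaussAux (T 1) n j + T ((n:ℤ)+↑j+1) * gaussAux (T 1) n (j+1) := by
      have P := gauss_succ (T 1 : LaurentPolynomial ℤ) n j
      have hp : (T (n:ℤ) * (T 1)^(j+1) : LaurentPolynomial ℤ) = T ((n:ℤ)+↑j+1) := by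
        rw [T_pow, ← T_add]; congr 1; push_cast; ring
      linear_combination T (n:ℤ) * P + (gaussAux (T 1) n (j+1) : LaurentPolynomial ℤ) * hp
    have h1 : (T (j:ℤ) * T ((n:ℤ)-↑j) : LaurentPolynomial ℤ) = T (n:ℤ) := by
      rw [← T_add]; congr 1; ring
    have h2 : (T (j:ℤ) * T ((n:ℤ)+1) : LaurentPolynomial ℤ) = T ((n:ℤ)+↑j+1) := by
      rw [← T_add]; congr 1; ring
    linear_combination hA - (gaussAux (T 1) (n+1) (j+1) : LaurentPolynomial ℤ) * h1 - hB
      + (gaussAux (T 1) n (j+1) : LaurentPolynomial ℤ) * h2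

lemma main_nat (M j : ℕ) :
    gaussAux (T 1) (M+2) (j+1)
      = (1 + T 1 - T ((M:ℤ)+2)) * gaussAux (T 1) (M+1) (j+1)
        + T (2*((M:ℤ)+2) - 2*((j:ℤ)+1)) * gaussAux (T 1) (M+1) j
        + (T ((M:ℤ)+2) - T 1) * gaussAux (T 1) M (j+1) := by
  have h1 := pascal_div (M+1) j
  have e1 : ((↑(M+1):ℤ) - ↑j) = (M:ℤ)+1-↑j := by push_cast; ring
  rw [e1] at h1
  have h2 := pascal_div M j
  have h3 := Elem M j
  have h4 : (T 1 * T ((M:ℤ)-↑j) : LaurentPolynomial ℤ) = T ((M:ℤ)+1-↑j) := by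
    rw [← T_add]; congr 1; ring
  have h5 : (T ((M:ℤ)+2) * T ((M:ℤ)-↑j) : LaurentPolynomial ℤ)
      = T ((M:ℤ)+1-↑j) * T ((M:ℤ)+1) := by
    rw [← T_add, ← T_add]; congr 1; ring
  have h6 : (T ((M:ℤ)+1-↑j) * T ((M:ℤ)+1-↑j) : LaurentPolynomial ℤ)
      = T (2*((M:ℤ)+2) - 2*((j:ℤ)+1)) := by
    rw [← T_add]; congr 1; ring
  rw [h1, h2]
  linear_combination T ((M:ℤ)+1-↑j) * h3
    + (gaussAux (T 1) (M+1) j : LaurentPolynomial ℤ) * h6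
    - (gaussAux (T 1) M j : LaurentPolynomial ℤ) * h4
    + (gaussAux (T 1) M j : LaurentPolynomial ℤ) * h5

lemma qbin_natcast (x : LaurentPolynomial ℤ) (n j : ℕ) :
    qbin x (n : ℤ) (j : ℤ) = gaussAux x n j := by simp [qbin]

lemma qbin_neg_right (x : LaurentPolynomial ℤ) (n : ℤ) {k : ℤ} (h : k < 0) :
    qbin x n k = 0 := by
  simp only [qbin, if_neg (by omega : ¬ (0 ≤ n ∧ 0 ≤ k))]

lemma qbin_neg_left (x : LaurentPolynomial ℤ) {n : ℤ} (k : ℤ) (h : n < 0) :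
    qbin x n k = 0 := by
  simp only [qbin, if_neg (by omega : ¬ (0 ≤ n ∧ 0 ≤ k))]

theorem stmt10 (L : ℕ) (hL : 0 < L) (k : ℤ) :
    qbin (T 1) L k =
      (1 + T 1 - T L) * qbin (T 1) ((L : ℤ) - 1) k +
        T (2 * L - 2 * k) * qbin (T 1) ((L : ℤ) - 1) (k - 1) +
          (T L - T 1) * qbin (T 1) ((L : ℤ) - 2) k := by
  by_cases hk : 0 ≤ k
  · obtain ⟨j, rfl⟩ : ∃ j : ℕ, k = (j : ℤ) := ⟨k.toNat, (Int.toNat_of_nonneg hk).symm⟩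
    match L, hL with
    | 1, _ =>
      rw [qbin_neg_left (T 1) (j:ℤ) (by norm_num : ((1:ℕ):ℤ) - 2 < 0)]
      rw [show ((1:ℕ):ℤ) - 1 = ((0:ℕ):ℤ) by norm_num]
      rw [qbin_natcast, qbin_natcast]
      match j with
      | 0 =>
        rw [qbin_neg_right (T 1) _ (by norm_num : ((0:ℕ):ℤ) - 1 < 0)]
        simp [gauss_zero]
      | 1 =>
        rw [show ((1:ℕ):ℤ) - 1 = ((0:ℕ):ℤ) by norm_num, qbin_natcast]
        have : gaussAux (T 1 : LaurentPolynomial ℤ) 0 1 = 0 := gauss_zero_of_lt _ 0 1 (by omega)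
        rw [this, gauss_zero]
        have h1 : gaussAux (T 1 : LaurentPolynomial ℤ) 1 1 = 1 := by
          rw [gauss_succ, gauss_zero, this]; ring
        rw [h1]
        rw [show (2 * ((1:ℕ):ℤ) - 2 * ((1:ℕ):ℤ)) = 0 by norm_num, T_zero]
        ring
      | (j'+2) =>
        rw [show ((j'+2:ℕ):ℤ) - 1 = ((j'+1:ℕ):ℤ) by push_cast; ring, qbin_natcast]
        rw [gauss_zero_of_lt _ 1 (j'+2) (by omega), gauss_zero_of_lt _ 0 (j'+2) (by omega),
          gauss_zero_of_lt _ 0 (j'+1) (by omega)]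
        ring
    | (M+2), _ =>
      rw [show ((M+2:ℕ):ℤ) - 1 = ((M+1:ℕ):ℤ) by push_cast; ring,
        show ((M+2:ℕ):ℤ) - 2 = ((M:ℕ):ℤ) by push_cast; ring]
      match j with
      | 0 =>
        rw [qbin_neg_right (T 1) _ (by norm_num : ((0:ℕ):ℤ) - 1 < 0)]
        rw [qbin_natcast, qbin_natcast, qbin_natcast]
        rw [gauss_zero, gauss_zero, gauss_zero]
        ring
      | (j'+1) =>
        rw [show ((j'+1:ℕ):ℤ) - 1 = ((j':ℕ):ℤ) by push_cast; ring]
        rw [qbin_natcast, qbin_natcast, qbin_natcast, qbin_natcast]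
        rw [show ((M+2:ℕ):ℤ) = (M:ℤ)+2 by push_cast; ring,
          show (2 * ((M:ℤ)+2) - 2 * ((j'+1:ℕ):ℤ)) = 2*((M:ℤ)+2) - 2*((j':ℤ)+1) by
            push_cast; ring]
        exact main_nat M j'
  · rw [qbin_neg_right (T 1) _ (by omega : k < 0),
      qbin_neg_right (T 1) _ (by omega : k < 0),
      qbin_neg_right (T 1) _ (by omega : k - 1 < 0),
      qbin_neg_right (T 1) _ (by omega : k < 0)]
    ring
end
end
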